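/- For ω ∈ ℝ with ω ≠ 0, the shifted optimal coefficients C_{β,ω}[a,b] = e^{2πiωa}·(b−a)·C_β(ω(b−a), N) (explicitly: C_{0,ω}[a,b] = h(1+2πiωh−e^{2πiωh})/(2πωh)²·e^{2πiωa}, C_{β,ω}[a,b] = h·2(1−cos 2πωh)/(2πωh)²·e^{2πiω(hβ+a)} for 1 ≤ β ≤ N−1, C_{N,ω}[a,b] = h(1−2πiωh−e^{−2πiωh})/(2πωh)²·e^{2πiωb}, with h = (b−a)/N) satisfy exactness for constants: ∑_{β=0}^{N} C_{β,ω}[a,b] = (e^{2πiωb} − e^{2πiωa})/(2πiω) = ∫_a^b e^{2πiωx} dx. -/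

import Mathlib

open Real Complex

private lemma helper (q r G EA z w hC : ℂ) (hz : z ≠ 0) (hw : w ≠ 0) (hh : hC ≠ 0)
    (hzw : z = w * hC) (hqr : q * r = 1) (n : ℕ)
    (hG : G * (q - 1) = q ^ n - 1) :
    hC * (1 + z - q) / (-z ^ 2) * EA + hC * (2 - q - r) / (-z ^ 2) * EA * (q * G)
      + hC * (1 - z - r) / (-z ^ 2) * (q ^ (n + 1) * EA)
      = (q ^ (n + 1) * EA - EA) / w := by
  have B : (1 + z - q) + (2 - q - r) * (q * G) + (1 - z - r) * q ^ (n+1)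
      = z * (1 - q ^ (n+1)) := by
    linear_combination (-(G + q^n)) * hqr + (-(q-1)) * hG
  calc hC * (1 + z - q) / (-z ^ 2) * EA + hC * (2 - q - r) / (-z ^ 2) * EA * (q * G)
      + hC * (1 - z - r) / (-z ^ 2) * (q ^ (n + 1) * EA)
      = hC * EA / (-z^2) * ((1 + z - q) + (2 - q - r) * (q * G) + (1 - z - r) * q ^ (n+1)) := by
        ring
    _ = hC * EA / (-z^2) * (z * (1 - q ^ (n+1))) := by rw [B]
    _ = (q ^ (n + 1) * EA - EA) / w := by rw [hzw]; field_simp; ring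

noncomputable def Cab (a b ω : ℝ) (N : ℕ) (β : ℕ) : ℂ :=
  let h : ℝ := (b - a) / N
  if β = 0 then
    (h : ℂ) * (1 + 2 * π * I * ω * h - Complex.exp (2 * π * I * ω * h)) / (2 * π * ω * h) ^ 2
      * Complex.exp (2 * π * I * ω * a)
  else if β = N then
    (h : ℂ) * (1 - 2 * π * I * ω * h - Complex.exp (-(2 * π * I * ω * h))) / (2 * π * ω * h) ^ 2
      * Complex.exp (2 * π * I * ω * b)
  else
    (h : ℂ) * (2 * (1 - Real.cos (2 * π * ω * h))) / (2 * π * ω * h) ^ 2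
      * Complex.exp (2 * π * I * ω * (h * β + a))

private lemma stmt17_aux (a b : ℝ) (hab : a < b) (ω : ℝ) (hω : ω ≠ 0) (n : ℕ) :
    (∑ β ∈ Finset.range (n + 1 + 1), Cab a b ω (n+1) β)
      = (Complex.exp (2 * π * I * ω * b) - Complex.exp (2 * π * I * ω * a))
          / (2 * π * I * ω) := by
  set h : ℝ := (b - a) / ((n+1 : ℕ) : ℝ) with hh_def
  have hhpos : 0 < h := by
    rw [hh_def]
    apply div_pos (by linarith) (by positivity)
  have hh0 : h ≠ 0 := ne_of_gt hhpos
  -- complex abbreviations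
  have hhC : (h : ℂ) ≠ 0 := ofReal_ne_zero.mpr hh0
  have hπ : (π : ℂ) ≠ 0 := ofReal_ne_zero.mpr Real.pi_ne_zero
  have hωC : (ω : ℂ) ≠ 0 := ofReal_ne_zero.mpr hω
  have hz0 : (2 * (π:ℂ) * I * ω * h) ≠ 0 := by
    apply mul_ne_zero (mul_ne_zero (mul_ne_zero (mul_ne_zero two_ne_zero hπ) I_ne_zero) hωC) hhC
  have hw0 : (2 * (π:ℂ) * I * ω) ≠ 0 := by
    apply mul_ne_zero (mul_ne_zero (mul_ne_zero two_ne_zero hπ) I_ne_zero) hωC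
  have hd : ((2 * (π:ℂ) * ω * h) ^ 2) = -(2 * (π:ℂ) * I * ω * h) ^ 2 := by
    have : (I:ℂ)^2 = -1 := Complex.I_sq
    linear_combination (4*(π:ℂ)^2*(ω:ℂ)^2*(h:ℂ)^2) * this
  have hqr : Complex.exp (2 * π * I * ω * h) * Complex.exp (-(2 * π * I * ω * h)) = 1 := by
    rw [← Complex.exp_add]; simp
  have hcos : ((Real.cos (2 * π * ω * h) : ℝ) : ℂ)
      = (Complex.exp (2 * (π:ℂ) * I * ω * h) + Complex.exp (-(2 * (π:ℂ) * I * ω * h))) / 2 := by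
    rw [Complex.ofReal_cos,
      show Complex.cos ↑(2 * π * ω * h)
        = (Complex.exp (↑(2 * π * ω * h) * I) + Complex.exp (-↑(2 * π * ω * h) * I)) / 2 from rfl,
      show ((2 * π * ω * h : ℝ) : ℂ) * I = 2 * (π:ℂ) * I * ω * h by push_cast; ring,
      show (-((2 * π * ω * h : ℝ) : ℂ)) * I = -(2 * (π:ℂ) * I * ω * h) by push_cast; ring]
  have hexp : ∀ β : ℕ, Complex.exp (2 * (π:ℂ) * I * ω * (h * β + a))
      = Complex.exp (2 * π * I * ω * h) ^ β * Complex.exp (2 * (π:ℂ) * I * ω * a) := by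
    intro β
    rw [← Complex.exp_nat_mul, ← Complex.exp_add]
    congr 1; push_cast; ring
  have hEb : Complex.exp (2 * (π:ℂ) * I * ω * b)
      = Complex.exp (2 * π * I * ω * h) ^ (n+1) * Complex.exp (2 * (π:ℂ) * I * ω * a) := by
    rw [← Complex.exp_nat_mul, ← Complex.exp_add]
    congr 1
    have hba : ((n:ℝ)+1) * h = b - a := by rw [hh_def]; field_simp; push_cast; ring
    have hbaC : ((n:ℂ) + 1) * (h:ℂ) = (b:ℂ) - (a:ℂ) := by exact_mod_cast congrArg Complex.ofReal hba
    push_cast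
    linear_combination (-(2 * (π:ℂ) * I * ω)) * hbaC
  rw [Finset.sum_range_succ, Finset.sum_range_succ']
  have hC0 : Cab a b ω (n+1) 0
      = (h:ℂ) * (1 + 2*(π:ℂ)*I*ω*h - Complex.exp (2*π*I*ω*h)) / (-(2*(π:ℂ)*I*ω*h)^2)
        * Complex.exp (2*(π:ℂ)*I*ω*a) := by
    simp only [Cab, eq_self_iff_true, if_true]
    rw [← hh_def, hd]
  have hCN : Cab a b ω (n+1) (n+1)
      = (h:ℂ) * (1 - 2*(π:ℂ)*I*ω*h - Complex.exp (-(2*π*I*ω*h))) / (-(2*(π:ℂ)*I*ω*h)^2)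
        * (Complex.exp (2*π*I*ω*h) ^ (n+1) * Complex.exp (2*(π:ℂ)*I*ω*a)) := by
    simp only [Cab, Nat.succ_ne_zero, if_false, eq_self_iff_true, if_true]
    rw [← hh_def, hd, hEb]
  have hmid : ∀ i ∈ Finset.range n, Cab a b ω (n+1) (i+1)
      = (h:ℂ) * (2 - Complex.exp (2*π*I*ω*h) - Complex.exp (-(2*π*I*ω*h))) / (-(2*(π:ℂ)*I*ω*h)^2)
        * Complex.exp (2*(π:ℂ)*I*ω*a) * Complex.exp (2*π*I*ω*h) ^ (i+1) := by
    intro i hi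
    have hin : i + 1 ≠ n + 1 := by have := Finset.mem_range.mp hi; omega
    simp only [Cab, Nat.succ_ne_zero, if_false, if_neg hin]
    rw [← hh_def, hd, hcos, hexp (i+1)]
    ring
  rw [Finset.sum_congr rfl hmid, hC0, hCN, hEb, ← Finset.mul_sum,
    show ∑ i ∈ Finset.range n, Complex.exp (2*π*I*ω*h) ^ (i+1)
      = Complex.exp (2*π*I*ω*h) * ∑ i ∈ Finset.range n, Complex.exp (2*π*I*ω*h) ^ i by
        rw [Finset.mul_sum]; exact Finset.sum_congr rfl fun i _ => pow_succ' _ i]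
  have := helper (Complex.exp (2*π*I*ω*h)) (Complex.exp (-(2*π*I*ω*h)))
    (∑ i ∈ Finset.range n, Complex.exp (2*π*I*ω*h) ^ i) (Complex.exp (2*(π:ℂ)*I*ω*a))
    (2*(π:ℂ)*I*ω*h) (2*(π:ℂ)*I*ω) (h:ℂ) hz0 hw0 hhC (by ring) hqr n
    (geom_sum_mul _ n)
  linear_combination this

theorem stmt17 (a b : ℝ) (hab : a < b) (ω : ℝ) (hω : ω ≠ 0) (N : ℕ) (hN : 1 ≤ N) :
    (∑ β ∈ Finset.range (N + 1), Cab a b ω N β)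
      = (Complex.exp (2 * π * I * ω * b) - Complex.exp (2 * π * I * ω * a))
          / (2 * π * I * ω) ∧
    (∑ β ∈ Finset.range (N + 1), Cab a b ω N β)
      = ∫ x in a..b, Complex.exp (2 * π * I * ω * x) := by
  obtain ⟨n, rfl⟩ : ∃ n, N = n + 1 := ⟨N - 1, (Nat.succ_pred_eq_of_pos hN).symm⟩
  have h1 := stmt17_aux a b hab ω hω n
  refine ⟨h1, h1.trans ?_⟩
  have hw0 : (2 * (π:ℂ) * I * ω) ≠ 0 := by
    apply mul_ne_zero (mul_ne_zero (mul_ne_zero two_ne_zero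
      (ofReal_ne_zero.mpr Real.pi_ne_zero)) I_ne_zero) (ofReal_ne_zero.mpr hω)
  rw [integral_exp_mul_complex hw0]
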